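/- Let H be a real Hilbert space, let A : H → Set H be monotone, let V ⊆ H be a closed linear subspace with orthogonal projection P_V, let C₁ : H → H be a map such that C := P_V ∘ C₁ ∘ P_V is monotone and μ-Lipschitz with μ > 0, and let γ > 0. Suppose z, z⋆, y ∈ H satisfy, with x = P_V z and x⋆ = P_V z⋆: 2x − z − γ C x − y ∈ γ A y and x⋆ − z⋆ − γ C x⋆ ∈ γ A x⋆. Define z⁺ = z + y − x − γ(C y − C x). Then ‖z⁺ − z⋆‖² ≤ ‖z − z⋆‖² − (1 − γ²μ²)‖x − y‖². -/

import Mathlib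

/-!
With `d = y - x - γ (C y - C x)` we have `z⁺ - z⋆ = (z - z⋆) + d`. Monotonicity of `A + C`
at the points `y` and `x⋆` gives `⟪y - x⋆, q + d⟫ ≤ 0`, where `q = (z - x) - (z⋆ - x⋆) ∈ Vᗮ`;
since `d - (y - x⋆) ∈ V`, this upgrades to `⟪(z - z⋆) + (y - x), d⟫ ≤ 0`. The Lipschitz bound
on `C` controls `‖d‖²`, and expanding `‖(z - z⋆) + d‖²` gives the claim.
-/

open RealInnerProductSpace Pointwise

section
variable {H : Type*} [NormedAddCommGroup H] [InnerProductSpace ℝ H]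

lemma inner_sub_nonneg_of_mem_smul {A : H → Set H}
    (hA : ∀ x y u v : H, u ∈ A x → v ∈ A y → 0 ≤ ⟪x - y, u - v⟫) {γ : ℝ} (hγ : 0 ≤ γ)
    {x y a b : H} (ha : a ∈ γ • A x) (hb : b ∈ γ • A y) : 0 ≤ ⟪x - y, a - b⟫ := by
  obtain ⟨u, hu, rfl⟩ := Set.mem_smul_set.mp ha
  obtain ⟨v, hv, rfl⟩ := Set.mem_smul_set.mp hb
  rw [← smul_sub, real_inner_smul_right]
  exact mul_nonneg hγ (hA x y u v hu hv)

lemma norm_sub_smul_sq_le_of_norm_le {u w : H} {γ μ : ℝ} (h : ‖w‖ ≤ μ * ‖u‖) :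
    ‖u - γ • w‖ ^ 2 ≤ 2 * ⟪u, u - γ • w⟫ - (1 - γ ^ 2 * μ ^ 2) * ‖u‖ ^ 2 := by
  have hw : ‖w‖ ^ 2 ≤ μ ^ 2 * ‖u‖ ^ 2 := by
    rw [← mul_pow]
    exact pow_le_pow_left₀ (norm_nonneg w) h 2
  have hγw := mul_le_mul_of_nonneg_left hw (sq_nonneg γ)
  rw [norm_sub_sq_real, norm_smul, Real.norm_eq_abs, mul_pow, sq_abs, inner_sub_right,
    real_inner_self_eq_norm_sq]
  linarith

lemma inner_add_nonpos_of_inner_sub_eq_zero {p q d : H} (h : ⟪p, q + d⟫ ≤ 0)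
    (horth : ⟪q, d - p⟫ = 0) : ⟪q + p, d⟫ ≤ 0 := by
  have : ⟪q + p, d⟫ = ⟪q, d - p⟫ + ⟪p, q + d⟫ := by
    rw [inner_add_left, inner_sub_right, inner_add_right, real_inner_comm q p]
    ring
  linarith

end

theorem fdrf_stmt8_general {H : Type*} [NormedAddCommGroup H] [InnerProductSpace ℝ H]
    (A : H → Set H)
    (hAmono : ∀ x y u v : H, u ∈ A x → v ∈ A y → 0 ≤ ⟪x - y, u - v⟫)
    (γ μ : ℝ) (hγ : 0 < γ)
    (V : Submodule ℝ H)
    (P : H → H) (hP : ∀ x : H, P x ∈ V ∧ x - P x ∈ Vᗮ)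
    (C₁ : H → H) (C : H → H) (hCdef : ∀ x : H, C x = P (C₁ (P x)))
    (hCmono : ∀ x y : H, 0 ≤ ⟪x - y, C x - C y⟫)
    (hClip : ∀ x y : H, ‖C x - C y‖ ≤ μ * ‖x - y‖)
    (z zs y : H) (x xs : H) (hxdef : x = P z) (hxsdef : xs = P zs)
    (hy : (2 : ℝ) • x - z - γ • C x - y ∈ γ • A y)
    (hxs : xs - zs - γ • C xs ∈ γ • A xs)
    (zp : H) (hzp : zp = z + y - x - γ • (C y - C x)) :
    ‖zp - zs‖ ^ 2 ≤ ‖z - zs‖ ^ 2 - (1 - γ ^ 2 * μ ^ 2) * ‖x - y‖ ^ 2 := by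
  obtain ⟨hxV, hzx⟩ : x ∈ V ∧ z - x ∈ Vᗮ := hxdef ▸ hP z
  obtain ⟨hxsV, hzxs⟩ : xs ∈ V ∧ zs - xs ∈ Vᗮ := hxsdef ▸ hP zs
  have hCV (w : H) : C w ∈ V := hCdef w ▸ (hP _).1
  set d := y - x - γ • (C y - C x) with hd
  have hmono : ⟪y - xs, ((z - x) - (zs - xs)) + d⟫ ≤ 0 := by
    have hsum := add_nonneg (inner_sub_nonneg_of_mem_smul hAmono hγ.le hy hxs)
      (mul_nonneg hγ.le (hCmono y xs))
    have hsplit : (2 : ℝ) • x - z - γ • C x - y - (xs - zs - γ • C xs) + γ • (C y - C xs)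
        = -(((z - x) - (zs - xs)) + d) := by
      rw [hd]; module
    rw [← real_inner_smul_right, ← inner_add_right, hsplit, inner_neg_right] at hsum
    linarith
  have horth : ⟪(z - x) - (zs - xs), d - (y - xs)⟫ = 0 := by
    refine Submodule.inner_left_of_mem_orthogonal ?_ (Vᗮ.sub_mem hzx hzxs)
    have hdiff : d - (y - xs) = xs - x - γ • (C y - C x) := by rw [hd]; abel
    rw [hdiff]
    exact V.sub_mem (V.sub_mem hxsV hxV) (V.smul_mem γ (V.sub_mem (hCV y) (hCV x)))
  have hkey : ⟪(z - zs) + (y - x), d⟫ ≤ 0 := by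
    convert inner_add_nonpos_of_inner_sub_eq_zero hmono horth using 2
    abel
  rw [inner_add_left] at hkey
  have hd_sq := norm_sub_smul_sq_le_of_norm_le (γ := γ) (hClip y x)
  have hzp' : zp - zs = (z - zs) + d := by rw [hzp, hd]; abel
  rw [hzp', norm_add_sq_real, norm_sub_rev x y]
  linarith

theorem fdrf_stmt8 {H : Type*} [NormedAddCommGroup H] [InnerProductSpace ℝ H] [CompleteSpace H]
    (A : H → Set H)
    (hAmono : ∀ x y u v : H, u ∈ A x → v ∈ A y → 0 ≤ ⟪x - y, u - v⟫)
    (γ μ : ℝ) (hγ : 0 < γ) (hμ : 0 < μ)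
    (V : Submodule ℝ H) (hV : IsClosed (V : Set H))
    (P : H → H) (hP : ∀ x : H, P x ∈ V ∧ x - P x ∈ Vᗮ)
    (C₁ : H → H) (C : H → H) (hCdef : ∀ x : H, C x = P (C₁ (P x)))
    (hCmono : ∀ x y : H, 0 ≤ ⟪x - y, C x - C y⟫)
    (hClip : ∀ x y : H, ‖C x - C y‖ ≤ μ * ‖x - y‖)
    (z zs y : H) (x xs : H) (hxdef : x = P z) (hxsdef : xs = P zs)
    (hy : (2 : ℝ) • x - z - γ • C x - y ∈ γ • A y)
    (hxs : xs - zs - γ • C xs ∈ γ • A xs)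
    (zp : H) (hzp : zp = z + y - x - γ • (C y - C x)) :
    ‖zp - zs‖ ^ 2 ≤ ‖z - zs‖ ^ 2 - (1 - γ ^ 2 * μ ^ 2) * ‖x - y‖ ^ 2 :=
  fdrf_stmt8_general A hAmono γ μ hγ V P hP C₁ C hCdef hCmono hClip z zs y x xs hxdef hxsdef hy hxs
    zp hzp
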